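/- Let λ be a σ-finite Borel measure on E = ℝ^ℓ ∖ {0} with Λ := ∫_E min(1,|e|²) λ(de) < ∞. Let v : [0,T]×ℝ^k → ℝ belong to the class 𝒰 with constants C ≥ 0 and p ≥ 0. Let β : [0,T]×ℝ^k×E → ℝ^k be Borel measurable with (i) |β(t,x,e)| ≤ C·min(1,|e|), (ii) |β(t,x,e) − β(t,x',e)| ≤ C|x−x'|·min(1,|e|), and (iii) (t,x) ↦ β(t,x,e) continuous for every e ∈ E. Let γ : [0,T]×ℝ^k×E → ℝ be Borel measurable with (i) |γ(t,x,e)| ≤ C·min(1,|e|), (ii) |γ(t,x,e) − γ(t,x',e)| ≤ C·min(1,|e|)·|x−x'|·(1+|x|^p+|x'|^p), and (iii) t ↦ γ(t,x,e) continuous for every (x,e). Then the function Bv : (t,x) ↦ ∫_E γ(t,x,e)(v(t,x+β(t,x,e)) − v(t,x)) λ(de) is well defined and continuous on [0,T]×ℝ^k, and it has polynomial growth in x uniformly in t. -/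

import Mathlib

/-!
Write `m(e) = min 1 ‖e‖`. The jump `β` has size at most `C m(e)`, so the growth condition on `v`
bounds the increment `v(t, x + β) - v(t, x)` by a polynomial in `‖x‖` times `m(e)`, and the factor
`γ` contributes a second `m(e)`. Hence the integrand is dominated by `K (1 + ‖x‖ ^ p) m(e) ^ 2`,
and `m(e) ^ 2 = min 1 (‖e‖ ^ 2)` is `λ`-integrable. This gives integrability and the growth bound at
once, and, since the domination is locally uniform in `(t, x)`, continuity of the integral by
dominated convergence. Pointwise in `e`, continuity of `γ` in `(t, x)` follows from its continuity
in `t` together with its locally Lipschitz dependence on `x`, uniformly in `t`.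
-/

open MeasureTheory Set Filter Topology

lemma Real.add_rpow_le_two_rpow_mul_rpow_add_rpow {a b p : ℝ} (ha : 0 ≤ a) (hb : 0 ≤ b)
    (hp : 0 ≤ p) : (a + b) ^ p ≤ 2 ^ p * (a ^ p + b ^ p) := calc
  (a + b) ^ p ≤ (2 * max a b) ^ p := by
    gcongr
    linarith [le_max_left a b, le_max_right a b]
  _ = 2 ^ p * max a b ^ p := Real.mul_rpow zero_le_two (ha.trans (le_max_left a b))
  _ ≤ 2 ^ p * (a ^ p + b ^ p) := by
    gcongr
    rcases max_choice a b with h | h <;> rw [h]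
    · linarith [Real.rpow_nonneg hb p]
    · linarith [Real.rpow_nonneg ha p]

lemma one_add_rpow_add_add_rpow_le {a c p : ℝ} (ha : 0 ≤ a) (hc : 0 ≤ c) (hp : 0 ≤ p) :
    1 + (a + c) ^ p + a ^ p ≤ (2 + 2 ^ p * (1 + c ^ p)) * (1 + a ^ p) := by
  have hac := Real.add_rpow_le_two_rpow_mul_rpow_add_rpow ha hc hp
  have ha' := Real.rpow_nonneg ha p
  have hc' := Real.rpow_nonneg hc p
  have h2 : (0 : ℝ) ≤ 2 ^ p := by positivity
  nlinarith [mul_nonneg h2 ha', mul_nonneg (mul_nonneg h2 hc') ha']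

lemma min_one_sq {a : ℝ} (ha : 0 ≤ a) : min 1 a ^ 2 = min 1 (a ^ 2) := by
  rcases le_total a 1 with h | h
  · rw [min_eq_right h, min_eq_right (pow_le_one₀ ha h)]
  · rw [min_eq_left h, min_eq_left (one_le_pow₀ h), one_pow]

lemma abs_mul_sub_le_of_growth {F : Type*} [NormedAddCommGroup F] {v : F → ℝ} {C p : ℝ}
    (hC : 0 ≤ C) (hp : 0 ≤ p)
    (hv : ∀ x x', |v x - v x'| ≤ C * (1 + ‖x‖ ^ p + ‖x'‖ ^ p) * ‖x - x'‖)
    {x b : F} {g m : ℝ} (hm : m ≤ 1) (hg : |g| ≤ C * m) (hb : ‖b‖ ≤ C * m) :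
    |g * (v (x + b) - v x)| ≤ C ^ 3 * (1 + (‖x‖ + C) ^ p + ‖x‖ ^ p) * m ^ 2 := by
  have hbC : ‖b‖ ≤ C := hb.trans (mul_le_of_le_one_right hC hm)
  have hxb : ‖x + b‖ ^ p ≤ (‖x‖ + C) ^ p :=
    Real.rpow_le_rpow (norm_nonneg _) ((norm_add_le x b).trans (by linarith)) hp
  have hincr : |v (x + b) - v x| ≤ C * (1 + (‖x‖ + C) ^ p + ‖x‖ ^ p) * (C * m) := by
    calc |v (x + b) - v x| ≤ C * (1 + ‖x + b‖ ^ p + ‖x‖ ^ p) * ‖x + b - x‖ := hv _ _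
      _ ≤ C * (1 + (‖x‖ + C) ^ p + ‖x‖ ^ p) * (C * m) := by
        rw [add_sub_cancel_left]
        gcongr
  calc |g * (v (x + b) - v x)| = |g| * |v (x + b) - v x| := abs_mul _ _
    _ ≤ C * m * (C * (1 + (‖x‖ + C) ^ p + ‖x‖ ^ p) * (C * m)) :=
        mul_le_mul hg hincr (abs_nonneg _) ((abs_nonneg g).trans hg)
    _ = C ^ 3 * (1 + (‖x‖ + C) ^ p + ‖x‖ ^ p) * m ^ 2 := by ring

theorem continuousOn_uncurry_of_continuousOn_left_of_dist_le {X Y Z : Type*} [TopologicalSpace X]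
    [TopologicalSpace Y] [PseudoMetricSpace Z] {f : X → Y → Z} {s : Set X} (ω : Y → Y → ℝ)
    (hf : ∀ y, ContinuousOn (f · y) s) (hω : ∀ y, Tendsto (ω y) (𝓝 y) (𝓝 0))
    (hdist : ∀ x ∈ s, ∀ y y', dist (f x y) (f x y') ≤ ω y y') :
    ContinuousOn (fun q : X × Y => f q.1 q.2) (s ×ˢ univ) := by
  rintro ⟨x₀, y₀⟩ ⟨hx₀, -⟩
  rw [ContinuousWithinAt, tendsto_iff_dist_tendsto_zero]
  have hright : Tendsto (fun q : X × Y => ω y₀ q.2) (𝓝[s ×ˢ univ] (x₀, y₀)) (𝓝 0) :=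
    (hω y₀).comp continuousWithinAt_snd.tendsto
  have hleft : Tendsto (fun q : X × Y => dist (f q.1 y₀) (f x₀ y₀))
      (𝓝[s ×ˢ univ] (x₀, y₀)) (𝓝 0) := by
    have h : ContinuousWithinAt (fun q : X × Y => f q.1 y₀) (s ×ˢ univ) (x₀, y₀) :=
      (hf y₀ x₀ hx₀).comp (g := (f · y₀)) continuousWithinAt_fst fun _ hq => hq.1
    exact tendsto_iff_dist_tendsto_zero.1 h.tendsto
  refine squeeze_zero' (.of_forall fun _ => dist_nonneg) ?_ (by simpa using hright.add hleft)
  filter_upwards [self_mem_nhdsWithin] with q hq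
  calc dist (f q.1 q.2) (f x₀ y₀)
        ≤ dist (f q.1 y₀) (f q.1 q.2) + dist (f q.1 y₀) (f x₀ y₀) := by
        rw [dist_comm (f q.1 y₀)]; exact dist_triangle _ _ _
    _ ≤ ω y₀ q.2 + dist (f q.1 y₀) (f x₀ y₀) := by gcongr; exact hdist q.1 hq.1 _ _

theorem continuousOn_integral_of_dominated_mul {X α G : Type*} [TopologicalSpace X]
    [FirstCountableTopology X] [MeasurableSpace α] [NormedAddCommGroup G] [NormedSpace ℝ G]
    {μ : Measure α} {F : X → α → G} {s : Set X} {w : X → ℝ} {g : α → ℝ} (hw : ContinuousOn w s)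
    (hg : Integrable g μ) (hg0 : 0 ≤ g) (hF_meas : ∀ x ∈ s, AEStronglyMeasurable (F x) μ)
    (h_bound : ∀ x ∈ s, ∀ a, ‖F x a‖ ≤ w x * g a) (h_cont : ∀ a, ContinuousOn (F · a) s) :
    ContinuousOn (fun x => ∫ a, F x a ∂μ) s := by
  intro x₀ hx₀
  have hw_near : ∀ᶠ x in 𝓝[s] x₀, w x < w x₀ + 1 :=
    (hw x₀ hx₀).eventually (gt_mem_nhds (lt_add_one _))
  refine continuousWithinAt_of_dominated (bound := fun a => (w x₀ + 1) * g a) ?_ ?_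
    (hg.const_mul _) (.of_forall fun a => h_cont a x₀ hx₀)
  · filter_upwards [self_mem_nhdsWithin] with x hx using hF_meas x hx
  · filter_upwards [self_mem_nhdsWithin, hw_near] with x hx hwx
    exact .of_forall fun a => (h_bound x hx a).trans (by gcongr; exact hg0 a)

section JumpIntegrand

variable {τ E F : Type*} [NormedAddCommGroup F]

def jumpIntegrand (v : τ → F → ℝ) (β : τ → F → E → F) (γ : τ → F → E → ℝ) (t : τ) (x : F)
    (e : E) : ℝ :=
  γ t x e * (v t (x + β t x e) - v t x)

variable {v : τ → F → ℝ} {β : τ → F → E → F} {γ : τ → F → E → ℝ} {S : Set τ} {C p : ℝ}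

lemma abs_jumpIntegrand_le [NormedAddCommGroup E] (hC : 0 ≤ C) (hp : 0 ≤ p)
    (hvlip : ∀ t ∈ S, ∀ x x', |v t x - v t x'| ≤ C * (1 + ‖x‖ ^ p + ‖x'‖ ^ p) * ‖x - x'‖)
    (hβb : ∀ t x e, ‖β t x e‖ ≤ C * min 1 ‖e‖) (hγb : ∀ t x e, |γ t x e| ≤ C * min 1 ‖e‖)
    (t : τ) (ht : t ∈ S) (x : F) (e : E) :
    |jumpIntegrand v β γ t x e| ≤
      C ^ 3 * (2 + 2 ^ p * (1 + C ^ p)) * (1 + ‖x‖ ^ p) * min 1 (‖e‖ ^ 2) := by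
  calc |jumpIntegrand v β γ t x e|
      ≤ C ^ 3 * (1 + (‖x‖ + C) ^ p + ‖x‖ ^ p) * min 1 ‖e‖ ^ 2 :=
        abs_mul_sub_le_of_growth hC hp (hvlip t ht) (min_le_left _ _) (hγb t x e) (hβb t x e)
    _ ≤ C ^ 3 * ((2 + 2 ^ p * (1 + C ^ p)) * (1 + ‖x‖ ^ p)) * min 1 ‖e‖ ^ 2 := by
        gcongr
        exact one_add_rpow_add_add_rpow_le (norm_nonneg x) hC hp
    _ = _ := by rw [min_one_sq (norm_nonneg e)]; ring

lemma measurable_jumpIntegrand [MeasurableSpace τ] [MeasurableSpace E] [MeasurableSpace F]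
    [OpensMeasurableSpace F] (hβ : Measurable fun q : τ × F × E => β q.1 q.2.1 q.2.2)
    (hγ : Measurable fun q : τ × F × E => γ q.1 q.2.1 q.2.2) {t : τ} (hv : Continuous (v t))
    (x : F) : Measurable (jumpIntegrand v β γ t x) := by
  have hslice : Measurable fun e : E => (t, x, e) := by fun_prop
  exact (hγ.comp hslice).mul
    (((hv.comp (continuous_const_add x)).measurable.comp (hβ.comp hslice)).sub measurable_const)

lemma continuousOn_jumpIntegrand [TopologicalSpace τ] [NormedAddCommGroup E] (hp : 0 ≤ p)
    (hvcont : ContinuousOn (fun q : τ × F => v q.1 q.2) (S ×ˢ univ)) {e : E}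
    (hβcont : ContinuousOn (fun q : τ × F => β q.1 q.2 e) (S ×ˢ univ))
    (hγcont : ∀ x, ContinuousOn (fun t => γ t x e) S)
    (hγlip : ∀ t x x',
      |γ t x e - γ t x' e| ≤ C * min 1 ‖e‖ * ‖x - x'‖ * (1 + ‖x‖ ^ p + ‖x'‖ ^ p)) :
    ContinuousOn (fun q : τ × F => jumpIntegrand v β γ q.1 q.2 e) (S ×ˢ univ) := by
  have hγ : ContinuousOn (fun q : τ × F => γ q.1 q.2 e) (S ×ˢ univ) := by
    refine continuousOn_uncurry_of_continuousOn_left_of_dist_le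
      (fun x x' => C * min 1 ‖e‖ * ‖x - x'‖ * (1 + ‖x‖ ^ p + ‖x'‖ ^ p)) hγcont (fun x => ?_)
      fun t _ x x' => hγlip t x x'
    have hcont :
        Continuous fun x' : F => C * min 1 ‖e‖ * ‖x - x'‖ * (1 + ‖x‖ ^ p + ‖x'‖ ^ p) := by
      fun_prop (disch := exact Or.inr hp)
    simpa using hcont.tendsto x
  have hshift : ContinuousOn (fun q : τ × F => v q.1 (q.2 + β q.1 q.2 e)) (S ×ˢ univ) :=
    hvcont.comp (continuousOn_fst.prodMk (continuousOn_snd.add hβcont))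
      fun _ hq => ⟨hq.1, trivial⟩
  exact hγ.mul (hshift.sub hvcont)

end JumpIntegrand

theorem nonlocal_operator_continuous_poly_growth_general {ℓ k : ℕ}
    (T : ℝ)
    (lam : Measure (EuclideanSpace ℝ (Fin ℓ)))
    (hint : Integrable (fun e => min 1 (‖e‖ ^ 2)) lam)
    (C p : ℝ) (hC : 0 ≤ C) (hp : 0 ≤ p)
    (v : ℝ → EuclideanSpace ℝ (Fin k) → ℝ)
    (hvcont : ContinuousOn (fun q : ℝ × EuclideanSpace ℝ (Fin k) => v q.1 q.2)
      (Set.Icc (0 : ℝ) T ×ˢ Set.univ))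
    (hvlip : ∀ t ∈ Set.Icc (0 : ℝ) T, ∀ x x',
      |v t x - v t x'| ≤ C * (1 + ‖x‖ ^ p + ‖x'‖ ^ p) * ‖x - x'‖)
    (β : ℝ → EuclideanSpace ℝ (Fin k) → EuclideanSpace ℝ (Fin ℓ) →
      EuclideanSpace ℝ (Fin k))
    (hβmeas : Measurable (fun q : ℝ × EuclideanSpace ℝ (Fin k) × EuclideanSpace ℝ (Fin ℓ) =>
      β q.1 q.2.1 q.2.2))
    (hβb : ∀ t x e, ‖β t x e‖ ≤ C * min 1 ‖e‖)
    (hβcont : ∀ e, ContinuousOn (fun q : ℝ × EuclideanSpace ℝ (Fin k) => β q.1 q.2 e)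
      (Set.Icc (0 : ℝ) T ×ˢ Set.univ))
    (γ : ℝ → EuclideanSpace ℝ (Fin k) → EuclideanSpace ℝ (Fin ℓ) → ℝ)
    (hγmeas : Measurable (fun q : ℝ × EuclideanSpace ℝ (Fin k) × EuclideanSpace ℝ (Fin ℓ) =>
      γ q.1 q.2.1 q.2.2))
    (hγb : ∀ t x e, |γ t x e| ≤ C * min 1 ‖e‖)
    (hγlip : ∀ t x x' e,
      |γ t x e - γ t x' e| ≤ C * min 1 ‖e‖ * ‖x - x'‖ * (1 + ‖x‖ ^ p + ‖x'‖ ^ p))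
    (hγcont : ∀ x e, ContinuousOn (fun t => γ t x e) (Set.Icc (0 : ℝ) T)) :
    (∀ t ∈ Set.Icc (0 : ℝ) T, ∀ x,
      Integrable (fun e => γ t x e * (v t (x + β t x e) - v t x)) lam) ∧
    ContinuousOn
      (fun q : ℝ × EuclideanSpace ℝ (Fin k) =>
        ∫ e, γ q.1 q.2 e * (v q.1 (q.2 + β q.1 q.2 e) - v q.1 q.2) ∂lam)
      (Set.Icc (0 : ℝ) T ×ˢ Set.univ) ∧
    ∃ C' q : ℝ, 0 ≤ C' ∧ 0 ≤ q ∧ ∀ t ∈ Set.Icc (0 : ℝ) T, ∀ x,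
      |∫ e, γ t x e * (v t (x + β t x e) - v t x) ∂lam| ≤ C' * (1 + ‖x‖ ^ q) := by
  set K := C ^ 3 * (2 + 2 ^ p * (1 + C ^ p))
  have hbound := abs_jumpIntegrand_le hC hp hvlip hβb hγb
  have hmeas : ∀ t ∈ Icc (0 : ℝ) T, ∀ x, Measurable (jumpIntegrand v β γ t x) := fun t ht =>
    measurable_jumpIntegrand hβmeas hγmeas <| hvcont.comp_continuous
      (continuous_const.prodMk continuous_id : Continuous fun x => (t, x)) fun _ => ⟨ht, trivial⟩
  have hInt : ∀ t ∈ Icc (0 : ℝ) T, ∀ x, Integrable (jumpIntegrand v β γ t x) lam :=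
    fun t ht x => (hint.const_mul _).mono' (hmeas t ht x).aestronglyMeasurable
      (.of_forall (hbound t ht x))
  have hΛ : 0 ≤ ∫ e, min 1 (‖e‖ ^ 2) ∂lam := integral_nonneg fun e => by positivity
  refine ⟨hInt, ?_, K * ∫ e, min 1 (‖e‖ ^ 2) ∂lam, p, by positivity, hp, fun t ht x => ?_⟩
  · refine continuousOn_integral_of_dominated_mul (w := fun q => K * (1 + ‖q.2‖ ^ p))
      (by fun_prop (disch := exact Or.inr hp)) hint (fun e => by positivity)
      (fun q hq => (hmeas q.1 hq.1 q.2).aestronglyMeasurable) (fun q hq => hbound q.1 hq.1 q.2)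
      fun e => continuousOn_jumpIntegrand hp hvcont (hβcont e) (hγcont · e) (hγlip · · · e)
  · calc |∫ e, jumpIntegrand v β γ t x e ∂lam|
        ≤ ∫ e, K * (1 + ‖x‖ ^ p) * min 1 (‖e‖ ^ 2) ∂lam := by
          rw [← Real.norm_eq_abs]
          exact norm_integral_le_of_norm_le (hint.const_mul _) (.of_forall (hbound t ht x))
      _ = K * (∫ e, min 1 (‖e‖ ^ 2) ∂lam) * (1 + ‖x‖ ^ p) := by
          rw [integral_const_mul]; ring

/-- Under the class-`𝒰` assumption on `v` and the standard conditions on `β`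
and `γ`, the function `Bv(t,x) = ∫ γ(t,x,e)(v(t,x+β(t,x,e)) − v(t,x)) λ(de)` is well
defined (the integrand is integrable) and continuous on `[0,T]×ℝ^k`, with polynomial
growth in `x` uniformly in `t`. -/
theorem nonlocal_operator_continuous_poly_growth {ℓ k : ℕ}
    (hℓ : 1 ≤ ℓ) (hk : 1 ≤ k) (T : ℝ) (hT : 0 < T)
    (lam : Measure (EuclideanSpace ℝ (Fin ℓ))) [SigmaFinite lam]
    (h0 : lam {0} = 0)
    (hint : Integrable (fun e => min 1 (‖e‖ ^ 2)) lam)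
    (C p : ℝ) (hC : 0 ≤ C) (hp : 0 ≤ p)
    (v : ℝ → EuclideanSpace ℝ (Fin k) → ℝ)
    (hvcont : ContinuousOn (fun q : ℝ × EuclideanSpace ℝ (Fin k) => v q.1 q.2)
      (Set.Icc (0 : ℝ) T ×ˢ Set.univ))
    (hvlip : ∀ t ∈ Set.Icc (0 : ℝ) T, ∀ x x',
      |v t x - v t x'| ≤ C * (1 + ‖x‖ ^ p + ‖x'‖ ^ p) * ‖x - x'‖)
    (β : ℝ → EuclideanSpace ℝ (Fin k) → EuclideanSpace ℝ (Fin ℓ) →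
      EuclideanSpace ℝ (Fin k))
    (hβmeas : Measurable (fun q : ℝ × EuclideanSpace ℝ (Fin k) × EuclideanSpace ℝ (Fin ℓ) =>
      β q.1 q.2.1 q.2.2))
    (hβb : ∀ t x e, ‖β t x e‖ ≤ C * min 1 ‖e‖)
    (hβlip : ∀ t x x' e, ‖β t x e - β t x' e‖ ≤ C * ‖x - x'‖ * min 1 ‖e‖)
    (hβcont : ∀ e, ContinuousOn (fun q : ℝ × EuclideanSpace ℝ (Fin k) => β q.1 q.2 e)
      (Set.Icc (0 : ℝ) T ×ˢ Set.univ))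
    (γ : ℝ → EuclideanSpace ℝ (Fin k) → EuclideanSpace ℝ (Fin ℓ) → ℝ)
    (hγmeas : Measurable (fun q : ℝ × EuclideanSpace ℝ (Fin k) × EuclideanSpace ℝ (Fin ℓ) =>
      γ q.1 q.2.1 q.2.2))
    (hγb : ∀ t x e, |γ t x e| ≤ C * min 1 ‖e‖)
    (hγlip : ∀ t x x' e,
      |γ t x e - γ t x' e| ≤ C * min 1 ‖e‖ * ‖x - x'‖ * (1 + ‖x‖ ^ p + ‖x'‖ ^ p))
    (hγcont : ∀ x e, ContinuousOn (fun t => γ t x e) (Set.Icc (0 : ℝ) T)) :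
    (∀ t ∈ Set.Icc (0 : ℝ) T, ∀ x,
      Integrable (fun e => γ t x e * (v t (x + β t x e) - v t x)) lam) ∧
    ContinuousOn
      (fun q : ℝ × EuclideanSpace ℝ (Fin k) =>
        ∫ e, γ q.1 q.2 e * (v q.1 (q.2 + β q.1 q.2 e) - v q.1 q.2) ∂lam)
      (Set.Icc (0 : ℝ) T ×ˢ Set.univ) ∧
    ∃ C' q : ℝ, 0 ≤ C' ∧ 0 ≤ q ∧ ∀ t ∈ Set.Icc (0 : ℝ) T, ∀ x,
      |∫ e, γ t x e * (v t (x + β t x e) - v t x) ∂lam| ≤ C' * (1 + ‖x‖ ^ q) :=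
  nonlocal_operator_continuous_poly_growth_general T lam hint C p hC hp v hvcont hvlip β hβmeas hβb
    hβcont γ hγmeas hγb hγlip hγcont
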